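/- Let v and w be words over {0,1,•} of lengths M−1 and N−1 respectively, and let Δ be an M,N-invariant set fitting (0v, 0w). Then dec(Δ) is an M,N-invariant set; if M+N ∈ Δ then dec(Δ) fits (v1, w1), while if M+N ∉ Δ then dec(Δ) fits (v0, w0). -/
import Mathlib


/-- The alphabet {0, 1, •}. -/
inductive Symb where
  | zero : Symb
  | one : Symb
  | bullet : Symb
deriving DecidableEq

/-- An `M,N`-invariant set: a subset of ℕ with finite complement,
closed under adding `M` and adding `N`. -/
def Invariant (M N : ℕ) (Δ : Set ℕ) : Prop :=
  {n : ℕ | n ∉ Δ}.Finite ∧ ∀ i ∈ Δ, i + M ∈ Δ ∧ i + N ∈ Δ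

/-- `c` is a north step of `Δ`: `c ∉ Δ` and `c + N ∈ Δ`. -/
def NorthStep (N : ℕ) (Δ : Set ℕ) (c : ℕ) : Prop := c ∉ Δ ∧ c + N ∈ Δ

/-- `c` is an east step of `Δ`: `c ∉ Δ` and `c + M ∈ Δ`. -/
def EastStep (M : ℕ) (Δ : Set ℕ) (c : ℕ) : Prop := c ∉ Δ ∧ c + M ∈ Δ

/-- `area Δ` is the number of `c ≥ M + N` with `c ∉ Δ`. -/
noncomputable def area (M N : ℕ) (Δ : Set ℕ) : ℕ := {c : ℕ | M + N ≤ c ∧ c ∉ Δ}.ncard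

/-- `pdinv Δ` is the number of pairs `(c, d)` with `c < d`, `M ≤ d < c + M`,
`c` a north step of `Δ`, and `d ∉ Δ`. -/
noncomputable def pdinv (M N : ℕ) (Δ : Set ℕ) : ℕ :=
  {p : ℕ × ℕ | p.1 < p.2 ∧ M ≤ p.2 ∧ p.2 < p.1 + M ∧ NorthStep N Δ p.1 ∧ p.2 ∉ Δ}.ncard

/-- `Δ` fits the pair of words `(v, w)`, where `v` has length `M` and `w` has length `N`. -/
def Fits (M N : ℕ) (Δ : Set ℕ) (v w : List Symb) : Prop :=
  v.length = M ∧ w.length = N ∧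
  (∀ (i : ℕ) (hi : i < v.length),
    (v.get ⟨i, hi⟩ = Symb.bullet ↔ i ∈ Δ) ∧
    (v.get ⟨i, hi⟩ = Symb.one ↔ NorthStep N Δ i) ∧
    (v.get ⟨i, hi⟩ = Symb.zero ↔ (i ∉ Δ ∧ i + N ∉ Δ))) ∧
  (∀ (i : ℕ) (hi : i < w.length),
    (w.get ⟨i, hi⟩ = Symb.bullet ↔ i ∈ Δ) ∧
    (w.get ⟨i, hi⟩ = Symb.one ↔ EastStep M Δ i) ∧
    (w.get ⟨i, hi⟩ = Symb.zero ↔ (i ∉ Δ ∧ i + M ∉ Δ)))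

/-- Decrement: `dec Δ = {i : ℕ | i + 1 ∈ Δ}`. -/
def dec (Δ : Set ℕ) : Set ℕ := {i : ℕ | i + 1 ∈ Δ}

lemma word_aux (K : ℕ) (v : List Symb) (Δ : Set ℕ) (x : Symb)
    (hV : ∀ (i : ℕ) (hi : i < (Symb.zero :: v).length),
      ((Symb.zero :: v).get ⟨i, hi⟩ = Symb.bullet ↔ i ∈ Δ) ∧
      ((Symb.zero :: v).get ⟨i, hi⟩ = Symb.one ↔ (i ∉ Δ ∧ i + K ∈ Δ)) ∧
      ((Symb.zero :: v).get ⟨i, hi⟩ = Symb.zero ↔ (i ∉ Δ ∧ i + K ∉ Δ)))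
    (hx1 : x = Symb.bullet ↔ v.length + 1 ∈ Δ)
    (hx2 : x = Symb.one ↔ (v.length + 1 ∉ Δ ∧ v.length + 1 + K ∈ Δ))
    (hx3 : x = Symb.zero ↔ (v.length + 1 ∉ Δ ∧ v.length + 1 + K ∉ Δ)) :
    ∀ (i : ℕ) (hi : i < (v ++ [x]).length),
      ((v ++ [x]).get ⟨i, hi⟩ = Symb.bullet ↔ i ∈ dec Δ) ∧
      ((v ++ [x]).get ⟨i, hi⟩ = Symb.one ↔ (i ∉ dec Δ ∧ i + K ∈ dec Δ)) ∧
      ((v ++ [x]).get ⟨i, hi⟩ = Symb.zero ↔ (i ∉ dec Δ ∧ i + K ∉ dec Δ)) := by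
  intro i hi
  have hi' : i < v.length + 1 := by simpa using hi
  rcases lt_or_ge i v.length with h | h
  · have hget : (v ++ [x]).get ⟨i, hi⟩ = v.get ⟨i, h⟩ := by
      simp [List.getElem_append_left h]
    have := hV (i + 1) (by simp; omega)
    simp only [List.get_cons_succ] at this
    rw [hget]
    simpa [dec, Set.mem_setOf_eq, Nat.add_right_comm] using this
  · have hil : i = v.length := by omega
    subst hil
    have hget : (v ++ [x]).get ⟨v.length, hi⟩ = x := by
      simp
    rw [hget]
    refine ⟨?_, ?_, ?_⟩
    · simpa [dec, Set.mem_setOf_eq] using hx1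
    · simpa [dec, Set.mem_setOf_eq, Nat.add_right_comm] using hx2
    · simpa [dec, Set.mem_setOf_eq, Nat.add_right_comm] using hx3

/-- If `Δ` is an `M,N`-invariant set fitting `(0v, 0w)`, then `dec Δ`
is an `M,N`-invariant set; if `M + N ∈ Δ` then `dec Δ` fits `(v1, w1)`, while if
`M + N ∉ Δ` then `dec Δ` fits `(v0, w0)`. -/
theorem dec_fits_zero_zero (M N : ℕ) (hM : 0 < M) (hN : 0 < N)
    (v w : List Symb) (hv : v.length + 1 = M) (hw : w.length + 1 = N)
    (Δ : Set ℕ) (hΔ : Invariant M N Δ)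
    (hfit : Fits M N Δ (Symb.zero :: v) (Symb.zero :: w)) :
    Invariant M N (dec Δ) ∧
    (M + N ∈ Δ → Fits M N (dec Δ) (v ++ [Symb.one]) (w ++ [Symb.one])) ∧
    (M + N ∉ Δ → Fits M N (dec Δ) (v ++ [Symb.zero]) (w ++ [Symb.zero])) := by
  obtain ⟨hfin, hclos⟩ := hΔ
  obtain ⟨hl1, hl2, hV, hW⟩ := hfit
  have h0V := (hV 0 (by simp)).2.2
  have h0W := (hW 0 (by simp)).2.2
  have hNΔ : N ∉ Δ := by simpa using (h0V.mp rfl).2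
  have hMΔ : M ∉ Δ := by simpa using (h0W.mp rfl).2
  have hVgen : ∀ (i : ℕ) (hi : i < (Symb.zero :: v).length),
      ((Symb.zero :: v).get ⟨i, hi⟩ = Symb.bullet ↔ i ∈ Δ) ∧
      ((Symb.zero :: v).get ⟨i, hi⟩ = Symb.one ↔ (i ∉ Δ ∧ i + N ∈ Δ)) ∧
      ((Symb.zero :: v).get ⟨i, hi⟩ = Symb.zero ↔ (i ∉ Δ ∧ i + N ∉ Δ)) :=
    fun i hi => hV i hi
  have hWgen : ∀ (i : ℕ) (hi : i < (Symb.zero :: w).length),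
      ((Symb.zero :: w).get ⟨i, hi⟩ = Symb.bullet ↔ i ∈ Δ) ∧
      ((Symb.zero :: w).get ⟨i, hi⟩ = Symb.one ↔ (i ∉ Δ ∧ i + M ∈ Δ)) ∧
      ((Symb.zero :: w).get ⟨i, hi⟩ = Symb.zero ↔ (i ∉ Δ ∧ i + M ∉ Δ)) :=
    fun i hi => hW i hi
  refine ⟨⟨?_, ?_⟩, ?_, ?_⟩
  · have hsub : {n : ℕ | n ∉ dec Δ} ⊆ (fun n : ℕ => n + 1) ⁻¹' {n : ℕ | n ∉ Δ} := by
      intro n hn; exact hn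
    exact (hfin.preimage (fun a _ b _ h => by omega)).subset hsub
  · intro i hi
    have h := hclos (i + 1) hi
    exact ⟨by simpa [dec, Set.mem_setOf_eq, Nat.add_right_comm] using h.1,
           by simpa [dec, Set.mem_setOf_eq, Nat.add_right_comm] using h.2⟩
  · intro hMN
    refine ⟨by simp [hv], by simp [hw], ?_, ?_⟩
    · exact word_aux N v Δ Symb.one hVgen
        (by simp [hv, hMΔ]) (by simp [hv, hMΔ, hMN]) (by simp [hv, hMN])
    · exact word_aux M w Δ Symb.one hWgen
        (by simp [hw, hNΔ]) (by simp [hw, hNΔ, Nat.add_comm N M, hMN])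
        (by simp [hw, Nat.add_comm N M, hMN])
  · intro hMN
    refine ⟨by simp [hv], by simp [hw], ?_, ?_⟩
    · exact word_aux N v Δ Symb.zero hVgen
        (by simp [hv, hMΔ]) (by simp [hv, hMN]) (by simp [hv, hMΔ, hMN])
    · exact word_aux M w Δ Symb.zero hWgen
        (by simp [hw, hNΔ]) (by simp [hw, Nat.add_comm N M, hMN])
        (by simp [hw, hNΔ, Nat.add_comm N M, hMN])
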